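/- arXiv:1312.0338 — 5 statements merged into one kernel-verified Lean document; each statement's English description precedes it below -/
import Mathlib

section
/- Let k be a normed field and let E, F, F' be non-Archimedean seminormed spaces over k. Let u : E → F be a surjective linear map and C > 0 a constant such that for every f ∈ F and every ε > 0 there exists e ∈ E with u(e) = f and ‖e‖ ≤ C·‖f‖ + ε (i.e. u is a strict epimorphism). Let v : F' → F be a linear map and D ≥ 0 a constant with ‖v(x)‖ ≤ D·‖x‖ for all x ∈ F'. Then for every f' ∈ F' and every ε > 0 there exists e ∈ E with u(e) = v(f') and max(‖e‖, ‖f'‖) ≤ max(C·D, 1)·‖f'‖ + ε. (This shows that the projection from the fibre product E ×_F F', equipped with the norm max(‖e‖, ‖f'‖), onto F' is again a strict epimorphism; it is the key estimate in the paper's proof that the category of non-Archimedean Banach spaces is quasi-abelian.) -/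
theorem exists_lift_comp_norm_le {E F F' : Type*} [Norm E] [Norm F] [Norm F']
    (u : E → F) (v : F' → F) {C D : ℝ} (hC : 0 ≤ C)
    (hu : ∀ f : F, ∀ ε > (0 : ℝ), ∃ e : E, u e = f ∧ ‖e‖ ≤ C * ‖f‖ + ε)
    (hv : ∀ x : F', ‖v x‖ ≤ D * ‖x‖) (f' : F') {ε : ℝ} (hε : 0 < ε) :
    ∃ e : E, u e = v f' ∧ ‖e‖ ≤ C * D * ‖f'‖ + ε := by
  obtain ⟨e, he, hle⟩ := hu (v f') ε hε
  refine ⟨e, he, hle.trans ?_⟩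
  rw [mul_assoc]
  gcongr
  exact hv f'

theorem strict_epi_base_change_nonarch_general {k E F F' : Type*} [NormedField k]
    [SeminormedAddCommGroup E] [NormedSpace k E]
    [SeminormedAddCommGroup F] [NormedSpace k F]
    [SeminormedAddCommGroup F'] [NormedSpace k F']
    (u : E →ₗ[k] F)
    (C : ℝ) (hC : 0 < C)
    (hu : ∀ f : F, ∀ ε > (0 : ℝ), ∃ e : E, u e = f ∧ ‖e‖ ≤ C * ‖f‖ + ε)
    (v : F' →ₗ[k] F) (D : ℝ) (hv : ∀ x : F', ‖v x‖ ≤ D * ‖x‖) :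
    ∀ f' : F', ∀ ε > (0 : ℝ), ∃ e : E, u e = v f' ∧
      max ‖e‖ ‖f'‖ ≤ max (C * D) 1 * ‖f'‖ + ε := by
  intro f' ε hε
  obtain ⟨e, he, hle⟩ := exists_lift_comp_norm_le u v hC.le hu hv f' hε
  refine ⟨e, he, max_le (hle.trans ?_) ?_⟩
  · gcongr
    exact le_max_left _ _
  · have := mul_le_mul_of_nonneg_right (le_max_right (C * D) 1) (norm_nonneg f')
    linarith

/-- If `u : E → F` is a strict epimorphism of non-Archimedean seminormed spaces
(surjective, with `inf{‖e‖ : u e = f} ≤ C·‖f‖` expressed via the ε-characterisation)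
and `v : F' → F` is bounded with constant `D`, then for every `f' ∈ F'` and `ε > 0`
there is `e ∈ E` with `u e = v f'` and `max(‖e‖, ‖f'‖) ≤ max(C·D, 1)·‖f'‖ + ε`.
This shows that the projection of the fibre product `E ×_F F'` (with the max norm)
onto `F'` is again a strict epimorphism. -/
theorem strict_epi_base_change_nonarch {k E F F' : Type*} [NormedField k]
    [SeminormedAddCommGroup E] [NormedSpace k E] [IsUltrametricDist E]
    [SeminormedAddCommGroup F] [NormedSpace k F] [IsUltrametricDist F]
    [SeminormedAddCommGroup F'] [NormedSpace k F'] [IsUltrametricDist F']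
    (u : E →ₗ[k] F) (hsurj : Function.Surjective u)
    (C : ℝ) (hC : 0 < C)
    (hu : ∀ f : F, ∀ ε > (0 : ℝ), ∃ e : E, u e = f ∧ ‖e‖ ≤ C * ‖f‖ + ε)
    (v : F' →ₗ[k] F) (D : ℝ) (hD : 0 ≤ D) (hv : ∀ x : F', ‖v x‖ ≤ D * ‖x‖) :
    ∀ f' : F', ∀ ε > (0 : ℝ), ∃ e : E, u e = v f' ∧
      max ‖e‖ ‖f'‖ ≤ max (C * D) 1 * ‖f'‖ + ε :=
  strict_epi_base_change_nonarch_general u C hC hu v D hv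
end

section
/- Let k be a normed field and let E, E', F be non-Archimedean seminormed spaces over k. Let u : E → F be a linear map and C > 0 a constant with ‖e‖ ≤ C·‖u(e)‖ for all e ∈ E (i.e. u is a strict monomorphism), and let v : E → E' be a linear map with ‖v(e)‖ ≤ D·‖e‖ for all e ∈ E, where D ≥ 0. Then for every e' ∈ E' and every e ∈ E one has ‖e'‖ ≤ max(C·D, 1)·max(‖e' + v(e)‖, ‖u(e)‖). (This estimate shows that in the pushout (E' ⊕ F)/im(v, −u), equipped with the quotient of the max norm, the canonical map from E' is again a strict monomorphism; it is the key estimate in the paper's proof that the category of non-Archimedean Banach spaces is quasi-abelian.) -/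
lemma IsUltrametricDist.norm_le_max_norm_add {G : Type*} [SeminormedAddGroup G]
    [IsUltrametricDist G] (x y : G) : ‖x‖ ≤ max ‖x + y‖ ‖y‖ := by
  simpa using IsUltrametricDist.norm_add_le_max (x + y) (-y)

lemma max_le_max_one_mul_max {a b c : ℝ} (hb : 0 ≤ b) :
    max a (c * b) ≤ max c 1 * max a b := by
  simpa [max_comm, mul_comm] using max_mul_mul_le_max_mul_max a c zero_le_one hb

theorem strict_mono_pushout_nonarch_general {k E E' F : Type*} [NormedField k]
    [SeminormedAddCommGroup E] [NormedSpace k E]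
    [SeminormedAddCommGroup E'] [NormedSpace k E'] [IsUltrametricDist E']
    [SeminormedAddCommGroup F] [NormedSpace k F]
    (u : E →ₗ[k] F) (C : ℝ) (hu : ∀ e : E, ‖e‖ ≤ C * ‖u e‖)
    (v : E →ₗ[k] E') (D : ℝ) (hD : 0 ≤ D) (hv : ∀ e : E, ‖v e‖ ≤ D * ‖e‖) :
    ∀ (e' : E') (e : E), ‖e'‖ ≤ max (C * D) 1 * max ‖e' + v e‖ ‖u e‖ := by
  intro e' e
  have hve : ‖v e‖ ≤ C * D * ‖u e‖ :=
    calc ‖v e‖ ≤ D * ‖e‖ := hv e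
      _ ≤ D * (C * ‖u e‖) := mul_le_mul_of_nonneg_left (hu e) hD
      _ = C * D * ‖u e‖ := by ring
  calc ‖e'‖ ≤ max ‖e' + v e‖ ‖v e‖ := IsUltrametricDist.norm_le_max_norm_add e' (v e)
    _ ≤ max ‖e' + v e‖ (C * D * ‖u e‖) := max_le_max_left _ hve
    _ ≤ max (C * D) 1 * max ‖e' + v e‖ ‖u e‖ := max_le_max_one_mul_max (norm_nonneg _)

/-- If `u : E → F` is a strict monomorphism of non-Archimedean seminormed spaces
(`‖e‖ ≤ C·‖u e‖` with `C > 0`) and `v : E → E'` is bounded with constant `D ≥ 0`,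
then for all `e' ∈ E'` and `e ∈ E` we have
`‖e'‖ ≤ max(C·D, 1)·max(‖e' + v e‖, ‖u e‖)`.
This shows that in the pushout `(E' ⊕ F)/im(v, −u)` with the quotient of the max norm,
the canonical map from `E'` is again a strict monomorphism. -/
theorem strict_mono_pushout_nonarch {k E E' F : Type*} [NormedField k]
    [SeminormedAddCommGroup E] [NormedSpace k E] [IsUltrametricDist E]
    [SeminormedAddCommGroup E'] [NormedSpace k E'] [IsUltrametricDist E']
    [SeminormedAddCommGroup F] [NormedSpace k F] [IsUltrametricDist F]
    (u : E →ₗ[k] F) (C : ℝ) (hC : 0 < C) (hu : ∀ e : E, ‖e‖ ≤ C * ‖u e‖)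
    (v : E →ₗ[k] E') (D : ℝ) (hD : 0 ≤ D) (hv : ∀ e : E, ‖v e‖ ≤ D * ‖e‖) :
    ∀ (e' : E') (e : E), ‖e'‖ ≤ max (C * D) 1 * max ‖e' + v e‖ ‖u e‖ :=
  strict_mono_pushout_nonarch_general u C hu v D hD hv
end

section
/- Let R be a commutative Noetherian ring and let f ∈ R. Then X − f (that is, PowerSeries.X − PowerSeries.C f) is a non-zero-divisor in the formal power series ring R⟦X⟧: if g ∈ R⟦X⟧ satisfies (X − f)·g = 0, then g = 0. -/
/-!
If `(X - C f) * g = 0`, then `gₙ = f * gₙ₊₁` and `f * g₀ = 0`. Hence each coefficient `gₙ` is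
divisible by every power of `f`, while `f ^ (n + 1) * gₙ = f * g₀ = 0`. In a Noetherian ring a
large enough power of multiplication by `f` has kernel and image intersecting trivially, which
forces `gₙ = 0`.
-/

theorem IsNoetherian.eq_zero_of_pow_smul_eq_zero_of_forall_exists_pow_smul_eq
    {R M : Type*} [CommRing R] [AddCommGroup M] [Module R M] [IsNoetherian R M]
    {r : R} {x : M} {k : ℕ} (hk : r ^ k • x = 0) (hdiv : ∀ n, ∃ y, r ^ n • y = x) : x = 0 := by
  obtain ⟨n, hdisj, hkn⟩ := ((Algebra.lsmul R R M r).eventually_disjoint_ker_pow_range_pow.and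
    (Filter.eventually_ge_atTop k)).exists
  rw [← map_pow] at hdisj
  refine Submodule.disjoint_def.mp hdisj x ?_ (hdiv n)
  change r ^ n • x = 0
  rw [← Nat.sub_add_cancel hkn, pow_add, mul_smul, hk, smul_zero]

namespace PowerSeries

variable {R : Type*} [Ring R] {f : R} {g : R⟦X⟧}

theorem mul_coeff_zero_eq_zero_of_X_sub_C_mul_eq_zero (h : (X - C f) * g = 0) :
    f * coeff 0 g = 0 := by
  simpa using congrArg (coeff 0) h

theorem coeff_eq_mul_coeff_succ_of_X_sub_C_mul_eq_zero (h : (X - C f) * g = 0) (n : ℕ) :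
    coeff n g = f * coeff (n + 1) g := by
  simpa [sub_mul, sub_eq_zero, coeff_succ_X_mul] using congrArg (coeff (n + 1)) h

theorem coeff_eq_pow_mul_coeff_add_of_X_sub_C_mul_eq_zero (h : (X - C f) * g = 0) (n k : ℕ) :
    coeff n g = f ^ k * coeff (n + k) g := by
  induction k with
  | zero => simp
  | succ k ih =>
    rw [ih, coeff_eq_mul_coeff_succ_of_X_sub_C_mul_eq_zero h (n + k), pow_succ, mul_assoc,
      add_assoc]

theorem pow_succ_mul_coeff_eq_zero_of_X_sub_C_mul_eq_zero (h : (X - C f) * g = 0) (n : ℕ) :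
    f ^ (n + 1) * coeff n g = 0 := by
  calc f ^ (n + 1) * coeff n g = f * (f ^ n * coeff (0 + n) g) := by
        rw [pow_succ', mul_assoc, zero_add]
    _ = f * coeff 0 g := by rw [← coeff_eq_pow_mul_coeff_add_of_X_sub_C_mul_eq_zero h]
    _ = 0 := mul_coeff_zero_eq_zero_of_X_sub_C_mul_eq_zero h

end PowerSeries

/-- Over a commutative Noetherian ring `R`, for any `f ∈ R` the element `X - C f`
is a non-zero-divisor in the formal power series ring `R⟦X⟧`. -/
theorem X_sub_C_nonZeroDivisor_powerSeries {R : Type*} [CommRing R] [IsNoetherianRing R]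
    (f : R) (g : PowerSeries R)
    (h : (PowerSeries.X - PowerSeries.C f) * g = 0) : g = 0 := by
  ext n
  exact IsNoetherian.eq_zero_of_pow_smul_eq_zero_of_forall_exists_pow_smul_eq (r := f)
    (PowerSeries.pow_succ_mul_coeff_eq_zero_of_X_sub_C_mul_eq_zero h n)
    fun k ↦ ⟨_, (PowerSeries.coeff_eq_pow_mul_coeff_add_of_X_sub_C_mul_eq_zero h n k).symm⟩
end

section
/- Let 𝕜 be a nontrivially normed field, let E, V, W be seminormed spaces over 𝕜, and let p : E → V be a surjective linear map such that for some constant C ≥ 0, for every v ∈ V and every ε > 0 there exists e ∈ E with p(e) = v and ‖e‖ ≤ C·‖v‖ + ε. Then for every element u of the algebraic tensor product V ⊗[𝕜] W and every ε > 0 there exists t ∈ E ⊗[𝕜] W with (p ⊗ id_W)(t) = u and projectiveSeminorm(t) ≤ C·projectiveSeminorm(u) + ε. (Hence tensoring with W sends strict epimorphisms of seminormed spaces to strict epimorphisms for the projective tensor seminorm.) -/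
/-!
Pick a representation `u = Σᵢ vᵢ ⊗ wᵢ` whose cost `Σᵢ ‖vᵢ‖‖wᵢ‖` is within `δ` of the projective
seminorm of `u`, and lift each `vᵢ` to some `eᵢ` with `‖eᵢ‖ ≤ C‖vᵢ‖ + δᵢ`. Then `Σᵢ eᵢ ⊗ wᵢ` maps
to `u`, and its cost is at most `C` times that of the representation plus `Σᵢ δᵢ‖wᵢ‖`, which can be
made as small as we like.
-/

open scoped TensorProduct

/-- The projective tensor seminorm on the algebraic tensor product `E ⊗[𝕜] F` of two
seminormed spaces: the infimum of `Σᵢ ‖eᵢ‖·‖fᵢ‖` over all finite representations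
`u = Σᵢ eᵢ ⊗ fᵢ`. -/
noncomputable def projectiveSeminorm₂ (𝕜 : Type*) {E F : Type*} [NontriviallyNormedField 𝕜]
    [SeminormedAddCommGroup E] [NormedSpace 𝕜 E]
    [SeminormedAddCommGroup F] [NormedSpace 𝕜 F] (u : E ⊗[𝕜] F) : ℝ :=
  sInf {r : ℝ | ∃ l : List (E × F),
    u = (l.map fun p => p.1 ⊗ₜ[𝕜] p.2).sum ∧ r = (l.map fun p => ‖p.1‖ * ‖p.2‖).sum}

namespace ProjectiveSeminorm₂

section Representations

variable (𝕜 : Type*) {E F : Type*} [NontriviallyNormedField 𝕜]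
  [SeminormedAddCommGroup E] [NormedSpace 𝕜 E]
  [SeminormedAddCommGroup F] [NormedSpace 𝕜 F]

def tmulSum (l : List (E × F)) : E ⊗[𝕜] F :=
  (l.map fun p => p.1 ⊗ₜ[𝕜] p.2).sum

variable {𝕜}

def cost (l : List (E × F)) : ℝ :=
  (l.map fun p => ‖p.1‖ * ‖p.2‖).sum

lemma cost_nonneg (l : List (E × F)) : 0 ≤ cost l :=
  List.sum_nonneg (by simp only [List.mem_map]; rintro _ ⟨q, -, rfl⟩; positivity)

lemma exists_tmulSum_eq (u : E ⊗[𝕜] F) : ∃ l : List (E × F), tmulSum 𝕜 l = u := by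
  induction u using TensorProduct.induction_on with
  | zero => exact ⟨[], rfl⟩
  | tmul e f => exact ⟨[(e, f)], by simp [tmulSum]⟩
  | add x y hx hy =>
    obtain ⟨l₁, rfl⟩ := hx
    obtain ⟨l₂, rfl⟩ := hy
    exact ⟨l₁ ++ l₂, by simp [tmulSum]⟩

lemma projectiveSeminorm₂_eq_sInf_cost (u : E ⊗[𝕜] F) :
    projectiveSeminorm₂ 𝕜 u = sInf (cost '' {l | tmulSum 𝕜 l = u}) := by
  rw [projectiveSeminorm₂]
  congr 1 with r
  simp only [Set.mem_ofPred_eq, Set.mem_image, tmulSum, cost, eq_comm]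

lemma projectiveSeminorm₂_le_cost (l : List (E × F)) :
    projectiveSeminorm₂ 𝕜 (tmulSum 𝕜 l) ≤ cost l := by
  rw [projectiveSeminorm₂_eq_sInf_cost]
  exact csInf_le ⟨0, by rintro _ ⟨l', -, rfl⟩; exact cost_nonneg l'⟩ ⟨l, rfl, rfl⟩

lemma exists_cost_lt (u : E ⊗[𝕜] F) {δ : ℝ} (hδ : 0 < δ) :
    ∃ l : List (E × F), tmulSum 𝕜 l = u ∧ cost l < projectiveSeminorm₂ 𝕜 u + δ := by
  obtain ⟨l₀, hl₀⟩ := exists_tmulSum_eq (𝕜 := 𝕜) u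
  have hne : (cost '' {l : List (E × F) | tmulSum 𝕜 l = u}).Nonempty := ⟨_, l₀, hl₀, rfl⟩
  rw [projectiveSeminorm₂_eq_sInf_cost]
  obtain ⟨_, ⟨l, hl, rfl⟩, hlt⟩ := Real.lt_sInf_add_pos hne hδ
  exact ⟨l, hl, hlt⟩

end Representations

section Lifting

variable {𝕜 E V W : Type*} [NontriviallyNormedField 𝕜]
  [SeminormedAddCommGroup E] [NormedSpace 𝕜 E]
  [SeminormedAddCommGroup V] [NormedSpace 𝕜 V]
  [SeminormedAddCommGroup W] [NormedSpace 𝕜 W]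

lemma rTensor_tmulSum (p : E →ₗ[𝕜] V) (l : List (E × W)) :
    LinearMap.rTensor W p (tmulSum 𝕜 l) = tmulSum 𝕜 (l.map (Prod.map p id)) := by
  simp [tmulSum, map_list_sum, Function.comp_def]

variable {p : E → V} {C : ℝ}

lemma exists_lift_norm_mul_le (hp : ∀ v : V, ∀ ε > (0 : ℝ), ∃ e : E, p e = v ∧ ‖e‖ ≤ C * ‖v‖ + ε)
    (v : V) (w : W) {δ : ℝ} (hδ : 0 < δ) :
    ∃ e : E, p e = v ∧ ‖e‖ * ‖w‖ ≤ C * (‖v‖ * ‖w‖) + δ := by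
  have hw : 0 < ‖w‖ + 1 := by positivity
  obtain ⟨e, rfl, he⟩ := hp v (δ / (‖w‖ + 1)) (by positivity)
  refine ⟨e, rfl, ?_⟩
  have hδw : δ / (‖w‖ + 1) * ‖w‖ ≤ δ := by
    rw [div_mul_eq_mul_div, div_le_iff₀ hw]
    nlinarith [norm_nonneg w]
  calc ‖e‖ * ‖w‖ ≤ (C * ‖p e‖ + δ / (‖w‖ + 1)) * ‖w‖ := by gcongr
    _ ≤ C * (‖p e‖ * ‖w‖) + δ := by linarith

lemma exists_lift_cost_le (hp : ∀ v : V, ∀ ε > (0 : ℝ), ∃ e : E, p e = v ∧ ‖e‖ ≤ C * ‖v‖ + ε)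
    (l : List (V × W)) {δ : ℝ} (hδ : 0 < δ) :
    ∃ l' : List (E × W), l'.map (Prod.map p id) = l ∧ cost l' ≤ C * cost l + δ := by
  induction l generalizing δ with
  | nil => exact ⟨[], rfl, by simp [cost]; positivity⟩
  | cons vw l ih =>
    obtain ⟨v, w⟩ := vw
    obtain ⟨l', rfl, hl'⟩ := ih (half_pos hδ)
    obtain ⟨e, rfl, he⟩ := exists_lift_norm_mul_le hp v w (half_pos hδ)
    refine ⟨(e, w) :: l', rfl, ?_⟩
    simp only [cost, List.map_cons, List.sum_cons, List.map_map, Function.comp_def, Prod.map_fst,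
      Prod.map_snd, id] at hl' ⊢
    linarith

end Lifting

end ProjectiveSeminorm₂

open ProjectiveSeminorm₂

theorem rTensor_strict_epi_general {𝕜 E V W : Type*} [NontriviallyNormedField 𝕜]
    [SeminormedAddCommGroup E] [NormedSpace 𝕜 E]
    [SeminormedAddCommGroup V] [NormedSpace 𝕜 V]
    [SeminormedAddCommGroup W] [NormedSpace 𝕜 W]
    (p : E →ₗ[𝕜] V)
    (C : ℝ) (hC : 0 ≤ C)
    (hp : ∀ v : V, ∀ ε > (0 : ℝ), ∃ e : E, p e = v ∧ ‖e‖ ≤ C * ‖v‖ + ε) :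
    ∀ u : V ⊗[𝕜] W, ∀ ε > (0 : ℝ), ∃ t : E ⊗[𝕜] W,
      LinearMap.rTensor W p t = u ∧
      projectiveSeminorm₂ 𝕜 t ≤ C * projectiveSeminorm₂ 𝕜 u + ε := by
  intro u ε hε
  set δ := ε / (2 * (C + 1))
  have hCδ : C * δ ≤ ε / 2 := by
    rw [mul_div_assoc', div_le_div_iff₀ (by positivity) two_pos]
    nlinarith
  obtain ⟨l, hlu, hl⟩ := exists_cost_lt u (show 0 < δ by positivity)
  obtain ⟨l', hl'l, hl'⟩ := exists_lift_cost_le hp l (half_pos hε)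
  refine ⟨tmulSum 𝕜 l', by rw [rTensor_tmulSum, hl'l, hlu], ?_⟩
  calc projectiveSeminorm₂ 𝕜 (tmulSum 𝕜 l') ≤ cost l' := projectiveSeminorm₂_le_cost l'
    _ ≤ C * cost l + ε / 2 := hl'
    _ ≤ C * (projectiveSeminorm₂ 𝕜 u + δ) + ε / 2 := by gcongr
    _ ≤ C * projectiveSeminorm₂ 𝕜 u + ε := by linarith

/-- If `p : E → V` is a strict epimorphism of seminormed spaces (surjective, with
`inf{‖e‖ : p e = v} ≤ C·‖v‖` expressed via the ε-characterisation), then for every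
`u ∈ V ⊗[𝕜] W` and every `ε > 0` there is `t ∈ E ⊗[𝕜] W` with `(p ⊗ id_W) t = u` and
`projectiveSeminorm t ≤ C·projectiveSeminorm u + ε`; i.e. tensoring with `W` sends
strict epimorphisms to strict epimorphisms for the projective tensor seminorm. -/
theorem rTensor_strict_epi {𝕜 E V W : Type*} [NontriviallyNormedField 𝕜]
    [SeminormedAddCommGroup E] [NormedSpace 𝕜 E]
    [SeminormedAddCommGroup V] [NormedSpace 𝕜 V]
    [SeminormedAddCommGroup W] [NormedSpace 𝕜 W]
    (p : E →ₗ[𝕜] V) (hsurj : Function.Surjective p)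
    (C : ℝ) (hC : 0 ≤ C)
    (hp : ∀ v : V, ∀ ε > (0 : ℝ), ∃ e : E, p e = v ∧ ‖e‖ ≤ C * ‖v‖ + ε) :
    ∀ u : V ⊗[𝕜] W, ∀ ε > (0 : ℝ), ∃ t : E ⊗[𝕜] W,
      LinearMap.rTensor W p t = u ∧
      projectiveSeminorm₂ 𝕜 t ≤ C * projectiveSeminorm₂ 𝕜 u + ε :=
  rTensor_strict_epi_general p C hC hp
end

section
/- Let 𝒜, ℬ, 𝒞, 𝒟 be categories having all finite limits, and let F : 𝒜 ⥤ ℬ, F' : 𝒞 ⥤ 𝒟, G : 𝒞 ⥤ 𝒜 and G' : 𝒟 ⥤ ℬ be functors such that G and G' preserve finite limits, G' is conservative, and there is a natural isomorphism G ⋙ F ≅ F' ⋙ G' of functors 𝒞 ⥤ ℬ. If F preserves finite limits, then F' preserves finite limits. -/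
open CategoryTheory CategoryTheory.Limits

theorem preservesFiniteLimits_of_conservative_square_general
    {𝒜 ℬ 𝒞 𝒟 : Type*} [Category 𝒜] [Category ℬ] [Category 𝒞] [Category 𝒟]
    [HasFiniteLimits 𝒟]
    (F : 𝒜 ⥤ ℬ) (F' : 𝒞 ⥤ 𝒟) (G : 𝒞 ⥤ 𝒜) (G' : 𝒟 ⥤ ℬ)
    [PreservesFiniteLimits G] [PreservesFiniteLimits G']
    [G'.ReflectsIsomorphisms]
    (iso : G ⋙ F ≅ F' ⋙ G')
    [PreservesFiniteLimits F] :
    PreservesFiniteLimits F' :=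
  have : PreservesFiniteLimits (F' ⋙ G') := preservesFiniteLimits_of_natIso iso
  -- `G'` reflects finite limits: it is conservative, preserves them, and `𝒟` has them.
  preservesFiniteLimits_of_reflects_of_preserves F' G'

/-- Let `F : 𝒜 ⥤ ℬ`, `F' : 𝒞 ⥤ 𝒟`, `G : 𝒞 ⥤ 𝒜`, `G' : 𝒟 ⥤ ℬ` between categories with
finite limits, where `G` and `G'` preserve finite limits, `G'` is conservative, and
`G ⋙ F ≅ F' ⋙ G'`. If `F` preserves finite limits then so does `F'`. -/
theorem preservesFiniteLimits_of_conservative_square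
    {𝒜 ℬ 𝒞 𝒟 : Type*} [Category 𝒜] [Category ℬ] [Category 𝒞] [Category 𝒟]
    [HasFiniteLimits 𝒜] [HasFiniteLimits ℬ] [HasFiniteLimits 𝒞] [HasFiniteLimits 𝒟]
    (F : 𝒜 ⥤ ℬ) (F' : 𝒞 ⥤ 𝒟) (G : 𝒞 ⥤ 𝒜) (G' : 𝒟 ⥤ ℬ)
    [PreservesFiniteLimits G] [PreservesFiniteLimits G']
    [G'.ReflectsIsomorphisms]
    (iso : G ⋙ F ≅ F' ⋙ G')
    [PreservesFiniteLimits F] :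
    PreservesFiniteLimits F' :=
  preservesFiniteLimits_of_conservative_square_general F F' G G' iso
end
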